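/- arXiv:2405.09195 — 4 statements merged into one kernel-verified Lean document; each statement's English description precedes it below -/
import Mathlib

section
/- Let T > 0 and let a₁, a₂, b₁, b₂ ∈ (−1, ∞) satisfy a₁ + b₁ > −1 and a₂ + b₂ > −1. Then there exists a constant C = C(T, a₁, b₁, a₂, b₂) > 0 such that for every t ∈ [0, T] and every Borel measurable function f : [0, T] → [0, ∞), one has ∫₀ᵗ (t−s)^{a₁} s^{b₁} ( ∫₀ˢ (s−r)^{a₂} r^{b₂} f(r) dr ) ds ≤ C ( ∫₀ᵗ (t−s)^{a₁} s^{b₁} f(s) ds + ∫₀ᵗ (t−s)^{a₂} s^{b₂} f(s) ds ). -/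
/-!
By Tonelli on the triangle `0 < r < s < t`, the left-hand side equals
`∫₀ᵗ K(t, r) f(r) dr` with `K(t, r) = ∫ᵣᵗ (t-s)^a₁ s^b₁ (s-r)^a₂ r^b₂ ds`, so it suffices to show
`K(t, r) ≤ C ((t-r)^a₁ r^b₁ + (t-r)^a₂ r^b₂)` for `0 < r < t ≤ T`.
Since `s ≥ r` and `s ≥ s - r`, the factor `s^b₁` can be traded for `r^(b₁-β) (s-r)^β` with
`β = min b₂ 0` when `b₁ ≤ β`, and for `T^(b₁-γ) (s-r)^γ` with `γ = min b₁ 0` otherwise. What remains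
is a Beta integral `∫ᵣᵗ (t-s)^p (s-r)^q ds ≲ (t-r)^(p+q+1)`, and the leftover powers of `r` and
`t - r` have nonnegative exponents, so they are bounded by powers of `T`. The first case produces
the first kernel, the second case the second one.
-/

open MeasureTheory Set
open scoped ENNReal

theorem Real.rpow_le_two_rpow_abs_mul_rpow {x y : ℝ} (c : ℝ) (hx : 0 < x) (hxy : x ≤ y)
    (hyx : y ≤ 2 * x) : x ^ c ≤ 2 ^ |c| * y ^ c := by
  have hy : 0 < y := hx.trans_le hxy
  rcases le_or_gt 0 c with hc | hc
  · exact (Real.rpow_le_rpow hx.le hxy hc).trans <| le_mul_of_one_le_left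
      (Real.rpow_nonneg hy.le _) (Real.one_le_rpow one_le_two (abs_nonneg c))
  · calc x ^ c ≤ (y / 2) ^ c := Real.rpow_le_rpow_of_nonpos (by positivity) (by linarith) hc.le
      _ = 2 ^ |c| * y ^ c := by
          rw [Real.div_rpow hy.le zero_le_two, abs_of_neg hc, Real.rpow_neg zero_le_two,
            div_eq_mul_inv, mul_comm]

theorem Real.rpow_le_rpow_sub_mul_rpow {u s : ℝ} (b : ℝ) {γ : ℝ} (hu : 0 < u) (hus : u ≤ s)
    (hγ : γ ≤ 0) : s ^ b ≤ s ^ (b - γ) * u ^ γ := by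
  calc s ^ b = s ^ (b - γ) * s ^ γ := by rw [← Real.rpow_add (hu.trans_le hus), sub_add_cancel]
    _ ≤ s ^ (b - γ) * u ^ γ :=
        mul_le_mul_of_nonneg_left (Real.rpow_le_rpow_of_nonpos hu hus hγ)
          (Real.rpow_nonneg (hu.trans_le hus).le _)

theorem Real.rpow_mul_rpow_le_rpow {x y T e₁ e₂ e : ℝ} (hx : 0 ≤ x) (hxT : x ≤ T) (hy : 0 ≤ y)
    (hyT : y ≤ T) (he₁ : 0 ≤ e₁) (he₂ : 0 ≤ e₂) (he : e₁ + e₂ = e) : x ^ e₁ * y ^ e₂ ≤ T ^ e := by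
  rw [← he, Real.rpow_add_of_nonneg (hx.trans hxT) he₁ he₂]
  exact mul_le_mul (Real.rpow_le_rpow hx hxT he₁) (Real.rpow_le_rpow hy hyT he₂)
    (Real.rpow_nonneg hy _) (Real.rpow_nonneg (hx.trans hxT) _)

theorem lintegral_Ioo_ofReal_eq_intervalIntegral {g : ℝ → ℝ} {a b : ℝ} (hab : a ≤ b)
    (hg : IntervalIntegrable g volume a b) (hg0 : ∀ s ∈ Ioo a b, 0 ≤ g s) :
    ∫⁻ s in Ioo a b, ENNReal.ofReal (g s) = ENNReal.ofReal (∫ s in a..b, g s) := by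
  rw [intervalIntegral.integral_of_le hab, integral_Ioc_eq_integral_Ioo,
    ofReal_integral_eq_lintegral_ofReal ((intervalIntegrable_iff_integrableOn_Ioo_of_le hab).1 hg)
      (ae_restrict_of_forall_mem measurableSet_Ioo hg0)]

theorem lintegral_Ioo_sub_rpow {q a b : ℝ} (hq : -1 < q) (hab : a ≤ b) :
    ∫⁻ s in Ioo a b, ENNReal.ofReal ((s - a) ^ q) =
      ENNReal.ofReal ((b - a) ^ (q + 1) / (q + 1)) := by
  have hint : IntervalIntegrable (fun s => (s - a) ^ q) volume a b := by
    simpa using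
      (intervalIntegral.intervalIntegrable_rpow' (a := 0) (b := b - a) hq).comp_sub_right a
  rw [lintegral_Ioo_ofReal_eq_intervalIntegral hab hint
      fun s hs => Real.rpow_nonneg (sub_nonneg.2 hs.1.le) _,
    intervalIntegral.integral_comp_sub_right (· ^ q), sub_self, integral_rpow (Or.inl hq),
    Real.zero_rpow (by linarith), sub_zero]

theorem lintegral_Ioo_rsub_rpow {p a b : ℝ} (hp : -1 < p) (hab : a ≤ b) :
    ∫⁻ s in Ioo a b, ENNReal.ofReal ((b - s) ^ p) =
      ENNReal.ofReal ((b - a) ^ (p + 1) / (p + 1)) := by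
  have hint : IntervalIntegrable (fun s => (b - s) ^ p) volume a b := by
    simpa using
      ((intervalIntegral.intervalIntegrable_rpow' (a := 0) (b := b - a) hp).comp_sub_left b).symm
  rw [lintegral_Ioo_ofReal_eq_intervalIntegral hab hint
      fun s hs => Real.rpow_nonneg (sub_nonneg.2 hs.2.le) _,
    intervalIntegral.integral_comp_sub_left (· ^ p), sub_self, integral_rpow (Or.inl hp),
    Real.zero_rpow (by linarith), sub_zero]

theorem setLIntegral_ofReal_le_const_mul {α : Type*} [MeasurableSpace α] {μ : Measure α}
    {S S' : Set α} (hS : MeasurableSet S) (hSS' : S ⊆ S') {F h : α → ℝ} {M : ℝ} (hM : 0 ≤ M)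
    (hF : ∀ s ∈ S, F s ≤ M * h s) :
    ∫⁻ s in S, ENNReal.ofReal (F s) ∂μ ≤
      ENNReal.ofReal M * ∫⁻ s in S', ENNReal.ofReal (h s) ∂μ := by
  calc _ ≤ ∫⁻ s in S, ENNReal.ofReal M * ENNReal.ofReal (h s) ∂μ :=
        setLIntegral_mono' hS fun s hs => by
          rw [← ENNReal.ofReal_mul hM]
          exact ENNReal.ofReal_le_ofReal (hF s hs)
    _ = ENNReal.ofReal M * ∫⁻ s in S, ENNReal.ofReal (h s) ∂μ :=
        lintegral_const_mul' _ _ ENNReal.ofReal_ne_top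
    _ ≤ _ := by gcongr

theorem exists_lintegral_Ioo_rpow_mul_rpow_le {p q : ℝ} (hp : -1 < p) (hq : -1 < q) :
    ∃ C, 0 < C ∧ ∀ r t : ℝ, r < t →
      ∫⁻ s in Ioo r t, ENNReal.ofReal ((t - s) ^ p * (s - r) ^ q) ≤
        ENNReal.ofReal (C * (t - r) ^ (p + q + 1)) := by
  have hp1 : 0 < p + 1 := by linarith
  have hq1 : 0 < q + 1 := by linarith
  refine ⟨2 ^ |p| / (q + 1) + 2 ^ |q| / (p + 1), by positivity, fun r t hrt => ?_⟩
  -- On each half of `(r, t)`, the factor singular at the far endpoint is within a factor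
  -- `2 ^ |·|` of its value at the near endpoint.
  set m := (r + t) / 2 with hm
  have hτ : 0 < t - r := sub_pos.2 hrt
  have hleft : ∫⁻ s in Ioc r m, ENNReal.ofReal ((t - s) ^ p * (s - r) ^ q) ≤
      ENNReal.ofReal (2 ^ |p| * (t - r) ^ p) * ENNReal.ofReal ((t - r) ^ (q + 1) / (q + 1)) := by
    rw [← lintegral_Ioo_sub_rpow hq hrt.le]
    refine setLIntegral_ofReal_le_const_mul measurableSet_Ioc
      (Ioc_subset_Ioo_right (by linarith)) (by positivity) fun s hs => ?_
    exact mul_le_mul_of_nonneg_right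
      (Real.rpow_le_two_rpow_abs_mul_rpow p (by linarith [hs.2]) (by linarith [hs.1])
        (by linarith [hs.2]))
      (Real.rpow_nonneg (by linarith [hs.1]) _)
  have hright : ∫⁻ s in Ioo m t, ENNReal.ofReal ((t - s) ^ p * (s - r) ^ q) ≤
      ENNReal.ofReal (2 ^ |q| * (t - r) ^ q) * ENNReal.ofReal ((t - r) ^ (p + 1) / (p + 1)) := by
    rw [← lintegral_Ioo_rsub_rpow hp hrt.le]
    refine setLIntegral_ofReal_le_const_mul measurableSet_Ioo
      (Ioo_subset_Ioo_left (by linarith)) (by positivity) fun s hs => ?_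
    rw [mul_comm]
    exact mul_le_mul_of_nonneg_right
      (Real.rpow_le_two_rpow_abs_mul_rpow q (by linarith [hs.1]) (by linarith [hs.2])
        (by linarith [hs.1]))
      (Real.rpow_nonneg (by linarith [hs.2]) _)
  have e₁ : (t - r) ^ (p + q + 1) = (t - r) ^ p * (t - r) ^ (q + 1) := by
    rw [← Real.rpow_add hτ, add_assoc]
  have e₂ : (t - r) ^ (p + q + 1) = (t - r) ^ q * (t - r) ^ (p + 1) := by
    rw [← Real.rpow_add hτ]; ring_nf
  calc _ = ∫⁻ s in Ioc r m ∪ Ioo m t, ENNReal.ofReal ((t - s) ^ p * (s - r) ^ q) := by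
        rw [Ioc_union_Ioo_eq_Ioo (by linarith) (by linarith)]
    _ ≤ _ := (lintegral_union_le _ _ _).trans (add_le_add hleft hright)
    _ = _ := by
        rw [← ENNReal.ofReal_mul (by positivity), ← ENNReal.ofReal_mul (by positivity),
          ← ENNReal.ofReal_add (by positivity) (by positivity), add_mul]
        congr 2
        · rw [e₁]; ring
        · rw [e₂]; ring

noncomputable def volterraKernel (a b t s : ℝ) : ℝ := (t - s) ^ a * s ^ b

theorem volterraKernel_nonneg (a b : ℝ) {t s : ℝ} (hs : 0 ≤ s) (hst : s ≤ t) :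
    0 ≤ volterraKernel a b t s :=
  mul_nonneg (Real.rpow_nonneg (sub_nonneg.2 hst) a) (Real.rpow_nonneg hs b)

theorem exists_lintegral_volterraKernel_mul_le_of_rpow_le {a₁ a₂ b₁ b₂ γ : ℝ} (ha₁ : -1 < a₁)
    (hγ : -1 < a₂ + γ) :
    ∃ C, 0 < C ∧ ∀ X r t : ℝ, 0 ≤ X → 0 < r → r < t →
      (∀ s ∈ Ioo r t, s ^ b₁ ≤ X * (s - r) ^ γ) →
      ∫⁻ s in Ioo r t, ENNReal.ofReal (volterraKernel a₁ b₁ t s) *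
          ENNReal.ofReal (volterraKernel a₂ b₂ s r) ≤
        ENNReal.ofReal (C * X * r ^ b₂ * (t - r) ^ (a₁ + (a₂ + γ) + 1)) := by
  obtain ⟨C, hC, hbeta⟩ := exists_lintegral_Ioo_rpow_mul_rpow_le ha₁ hγ
  refine ⟨C, hC, fun X r t hX hr hrt hpow => ?_⟩
  have hXr : 0 ≤ X * r ^ b₂ := mul_nonneg hX (Real.rpow_nonneg hr.le _)
  calc _ ≤ ∫⁻ s in Ioo r t, ENNReal.ofReal (X * r ^ b₂) *
          ENNReal.ofReal ((t - s) ^ a₁ * (s - r) ^ (a₂ + γ)) := by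
        refine setLIntegral_mono' measurableSet_Ioo fun s hs => ?_
        have hsr : 0 < s - r := sub_pos.2 hs.1
        have hts : 0 ≤ (t - s) ^ a₁ := Real.rpow_nonneg (sub_nonneg.2 hs.2.le) _
        rw [← ENNReal.ofReal_mul (volterraKernel_nonneg _ _ (hr.trans hs.1).le hs.2.le),
          ← ENNReal.ofReal_mul hXr]
        refine ENNReal.ofReal_le_ofReal ?_
        calc (t - s) ^ a₁ * s ^ b₁ * ((s - r) ^ a₂ * r ^ b₂)
            ≤ (t - s) ^ a₁ * (X * (s - r) ^ γ) * ((s - r) ^ a₂ * r ^ b₂) := by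
              gcongr
              exact hpow s hs
          _ = X * r ^ b₂ * ((t - s) ^ a₁ * (s - r) ^ (a₂ + γ)) := by
              rw [Real.rpow_add hsr]; ring
    _ = ENNReal.ofReal (X * r ^ b₂) *
          ∫⁻ s in Ioo r t, ENNReal.ofReal ((t - s) ^ a₁ * (s - r) ^ (a₂ + γ)) :=
        lintegral_const_mul' _ _ ENNReal.ofReal_ne_top
    _ ≤ ENNReal.ofReal (X * r ^ b₂) * ENNReal.ofReal (C * (t - r) ^ (a₁ + (a₂ + γ) + 1)) := by
        gcongr
        exact hbeta r t hrt
    _ = _ := by rw [← ENNReal.ofReal_mul hXr]; ring_nf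

theorem exists_lintegral_volterraKernel_mul_le_of_le_min {T a₁ a₂ b₁ b₂ : ℝ} (hT : 0 < T)
    (ha₁ : -1 < a₁) (ha₂ : -1 < a₂) (hab₂ : -1 < a₂ + b₂) (hb : b₁ ≤ min b₂ 0) :
    ∃ C, 0 < C ∧ ∀ r t : ℝ, 0 < r → r < t → t ≤ T →
      ∫⁻ s in Ioo r t, ENNReal.ofReal (volterraKernel a₁ b₁ t s) *
          ENNReal.ofReal (volterraKernel a₂ b₂ s r) ≤
        ENNReal.ofReal (C * volterraKernel a₁ b₁ t r) := by
  have hβ : -1 < a₂ + min b₂ 0 := by rw [← min_add_add_left, add_zero]; exact lt_min hab₂ ha₂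
  set β := min b₂ 0
  obtain ⟨C, hC, hK⟩ :=
    exists_lintegral_volterraKernel_mul_le_of_rpow_le (b₁ := b₁) (b₂ := b₂) ha₁ hβ
  refine ⟨C * T ^ (a₂ + b₂ + 1), by positivity, fun r t hr hrt htT => ?_⟩
  have hτ : 0 < t - r := sub_pos.2 hrt
  have hpow : ∀ s ∈ Ioo r t, s ^ b₁ ≤ r ^ (b₁ - β) * (s - r) ^ β := fun s hs =>
    (Real.rpow_le_rpow_sub_mul_rpow b₁ (sub_pos.2 hs.1) (by linarith [hs.1])
      (min_le_right _ _)).trans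
    (mul_le_mul_of_nonneg_right (Real.rpow_le_rpow_of_nonpos hr hs.1.le (by linarith))
      (Real.rpow_nonneg (sub_pos.2 hs.1).le _))
  refine (hK _ r t (Real.rpow_nonneg hr.le _) hr hrt hpow).trans (ENNReal.ofReal_le_ofReal ?_)
  calc C * r ^ (b₁ - β) * r ^ b₂ * (t - r) ^ (a₁ + (a₂ + β) + 1)
      = C * (r ^ (b₂ - β) * (t - r) ^ (a₂ + β + 1)) * ((t - r) ^ a₁ * r ^ b₁) := by
        rw [Real.rpow_sub hr, Real.rpow_sub hr, add_assoc, add_assoc, Real.rpow_add hτ,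
          ← add_assoc]
        field_simp
    _ ≤ C * T ^ (a₂ + b₂ + 1) * ((t - r) ^ a₁ * r ^ b₁) := by
        gcongr
        exact Real.rpow_mul_rpow_le_rpow hr.le (by linarith) hτ.le (by linarith)
          (by linarith [min_le_left b₂ 0]) (by linarith) (by ring)

theorem exists_lintegral_volterraKernel_mul_le_of_min_lt {T a₁ a₂ b₁ b₂ : ℝ} (hT : 0 < T)
    (ha₁ : -1 < a₁) (ha₂ : -1 < a₂) (hab₁ : -1 < a₁ + b₁) (hab₂ : -1 < a₂ + b₂)
    (hb : min b₂ 0 < b₁) :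
    ∃ C, 0 < C ∧ ∀ r t : ℝ, 0 < r → r < t → t ≤ T →
      ∫⁻ s in Ioo r t, ENNReal.ofReal (volterraKernel a₁ b₁ t s) *
          ENNReal.ofReal (volterraKernel a₂ b₂ s r) ≤
        ENNReal.ofReal (C * volterraKernel a₂ b₂ t r) := by
  have hab₂₁ : -1 < a₂ + b₁ := by rcases min_lt_iff.1 hb with h | h <;> linarith
  have hγ : -1 < a₂ + min b₁ 0 := by rw [← min_add_add_left, add_zero]; exact lt_min hab₂₁ ha₂
  have hγ₁ : -1 < a₁ + min b₁ 0 := by rw [← min_add_add_left, add_zero]; exact lt_min hab₁ ha₁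
  set γ := min b₁ 0
  obtain ⟨C, hC, hK⟩ :=
    exists_lintegral_volterraKernel_mul_le_of_rpow_le (b₁ := b₁) (b₂ := b₂) ha₁ hγ
  refine ⟨C * T ^ (a₁ + b₁ + 1), by positivity, fun r t hr hrt htT => ?_⟩
  have hτ : 0 < t - r := sub_pos.2 hrt
  have hpow : ∀ s ∈ Ioo r t, s ^ b₁ ≤ T ^ (b₁ - γ) * (s - r) ^ γ := fun s hs =>
    (Real.rpow_le_rpow_sub_mul_rpow b₁ (sub_pos.2 hs.1) (by linarith [hs.1])
      (min_le_right _ _)).trans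
    (mul_le_mul_of_nonneg_right
      (Real.rpow_le_rpow (by linarith [hs.1]) (by linarith [hs.2])
        (sub_nonneg.2 (min_le_left _ _)))
      (Real.rpow_nonneg (sub_pos.2 hs.1).le _))
  refine (hK _ r t (Real.rpow_nonneg hT.le _) hr hrt hpow).trans (ENNReal.ofReal_le_ofReal ?_)
  calc C * T ^ (b₁ - γ) * r ^ b₂ * (t - r) ^ (a₁ + (a₂ + γ) + 1)
      = C * (T ^ (b₁ - γ) * (t - r) ^ (a₁ + γ + 1)) * ((t - r) ^ a₂ * r ^ b₂) := by
        rw [show a₁ + (a₂ + γ) + 1 = a₂ + (a₁ + γ + 1) by ring, Real.rpow_add hτ]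
        ring
    _ ≤ C * T ^ (a₁ + b₁ + 1) * ((t - r) ^ a₂ * r ^ b₂) := by
        gcongr
        exact Real.rpow_mul_rpow_le_rpow hT.le le_rfl hτ.le (by linarith)
          (sub_nonneg.2 (min_le_left _ _)) (by linarith) (by ring)

theorem exists_lintegral_volterraKernel_mul_le {T a₁ a₂ b₁ b₂ : ℝ} (hT : 0 < T)
    (ha₁ : -1 < a₁) (ha₂ : -1 < a₂) (hab₁ : -1 < a₁ + b₁) (hab₂ : -1 < a₂ + b₂) :
    ∃ C, 0 < C ∧ ∀ r t : ℝ, 0 < r → r < t → t ≤ T →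
      ∫⁻ s in Ioo r t, ENNReal.ofReal (volterraKernel a₁ b₁ t s) *
          ENNReal.ofReal (volterraKernel a₂ b₂ s r) ≤
        ENNReal.ofReal C * (ENNReal.ofReal (volterraKernel a₁ b₁ t r) +
          ENNReal.ofReal (volterraKernel a₂ b₂ t r)) := by
  rcases le_or_gt b₁ (min b₂ 0) with hb | hb
  · obtain ⟨C, hC, hK⟩ := exists_lintegral_volterraKernel_mul_le_of_le_min hT ha₁ ha₂ hab₂ hb
    refine ⟨C, hC, fun r t hr hrt htT => (hK r t hr hrt htT).trans ?_⟩
    rw [ENNReal.ofReal_mul hC.le]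
    exact mul_le_mul_right le_self_add _
  · obtain ⟨C, hC, hK⟩ :=
      exists_lintegral_volterraKernel_mul_le_of_min_lt hT ha₁ ha₂ hab₁ hab₂ hb
    refine ⟨C, hC, fun r t hr hrt htT => (hK r t hr hrt htT).trans ?_⟩
    rw [ENNReal.ofReal_mul hC.le]
    exact mul_le_mul_right le_add_self _

theorem lintegral_Ioo_lintegral_Ioo_swap {g : ℝ → ℝ → ℝ≥0∞} (hg : Measurable (Function.uncurry g))
    (a b : ℝ) :
    ∫⁻ s in Ioo a b, ∫⁻ r in Ioo a s, g s r = ∫⁻ r in Ioo a b, ∫⁻ s in Ioo r b, g s r := by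
  set G : ℝ → ℝ → ℝ≥0∞ := fun s r => {p : ℝ × ℝ | p.2 < p.1}.indicator (Function.uncurry g) (s, r)
  have hG : Measurable (Function.uncurry G) :=
    hg.indicator (measurableSet_lt measurable_snd measurable_fst)
  calc _ = ∫⁻ s in Ioo a b, ∫⁻ r in Ioo a b, G s r := by
        refine setLIntegral_congr_fun measurableSet_Ioo fun s hs => ?_
        have : ∀ r, G s r = (Iio s).indicator (g s) r := fun r => by
          simp [G, indicator_apply]
        simp_rw [this, setLIntegral_indicator measurableSet_Iio, Iio_inter_Ioo,
          min_eq_left hs.2.le]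
    _ = ∫⁻ r in Ioo a b, ∫⁻ s in Ioo a b, G s r := lintegral_lintegral_swap hG.aemeasurable
    _ = _ := by
        refine setLIntegral_congr_fun measurableSet_Ioo fun r hr => ?_
        have : ∀ s, G s r = (Ioi r).indicator (fun s => g s r) s := fun s => by
          simp [G, indicator_apply]
        simp_rw [this, setLIntegral_indicator measurableSet_Ioi, Ioi_inter_Ioo,
          max_eq_left hr.1.le]

theorem lintegral_Ioo_mul_lintegral_Ioo_eq {k₁ F : ℝ → ℝ≥0∞} {k₂ : ℝ → ℝ → ℝ≥0∞}
    (hk₁ : Measurable k₁) (hk₂ : Measurable (Function.uncurry k₂)) (hF : Measurable F) (a b : ℝ) :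
    ∫⁻ s in Ioo a b, k₁ s * ∫⁻ r in Ioo a s, k₂ s r * F r =
      ∫⁻ r in Ioo a b, (∫⁻ s in Ioo r b, k₁ s * k₂ s r) * F r := by
  have hg : Measurable (Function.uncurry fun s r => k₁ s * (k₂ s r * F r)) :=
    (hk₁.comp measurable_fst).mul (hk₂.mul (hF.comp measurable_snd))
  calc _ = ∫⁻ s in Ioo a b, ∫⁻ r in Ioo a s, k₁ s * (k₂ s r * F r) :=
        lintegral_congr fun s => (lintegral_const_mul _ (hk₂.of_uncurry_left.mul hF)).symm
    _ = ∫⁻ r in Ioo a b, ∫⁻ s in Ioo r b, k₁ s * (k₂ s r * F r) :=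
        lintegral_Ioo_lintegral_Ioo_swap hg a b
    _ = _ := lintegral_congr fun r => by
        simp_rw [← mul_assoc]
        exact lintegral_mul_const _ (hk₁.mul hk₂.of_uncurry_right)

theorem volterra_kernel_composition_general
    (T : ℝ) (hT : 0 < T) (a₁ a₂ b₁ b₂ : ℝ)
    (ha₁ : -1 < a₁) (ha₂ : -1 < a₂)
    (hab₁ : -1 < a₁ + b₁) (hab₂ : -1 < a₂ + b₂) :
    ∃ C : ℝ, 0 < C ∧ ∀ t ∈ Icc (0 : ℝ) T, ∀ f : ℝ → ℝ,
      Measurable f → (∀ s, 0 ≤ f s) →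
      (∫⁻ s in Ioo (0 : ℝ) t, ENNReal.ofReal ((t - s) ^ a₁ * s ^ b₁) *
          ∫⁻ r in Ioo (0 : ℝ) s, ENNReal.ofReal ((s - r) ^ a₂ * r ^ b₂ * f r)) ≤
        ENNReal.ofReal C *
          ((∫⁻ s in Ioo (0 : ℝ) t, ENNReal.ofReal ((t - s) ^ a₁ * s ^ b₁ * f s)) +
            ∫⁻ s in Ioo (0 : ℝ) t, ENNReal.ofReal ((t - s) ^ a₂ * s ^ b₂ * f s)) := by
  obtain ⟨C, hC, hK⟩ := exists_lintegral_volterraKernel_mul_le hT ha₁ ha₂ hab₁ hab₂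
  refine ⟨C, hC, fun t ht f hf hf0 => ?_⟩
  have hκ₁ : Measurable fun s => ENNReal.ofReal (volterraKernel a₁ b₁ t s) := by
    unfold volterraKernel; fun_prop
  have hκ₂ :
      Measurable (Function.uncurry fun s r => ENNReal.ofReal (volterraKernel a₂ b₂ s r)) := by
    unfold volterraKernel Function.uncurry; fun_prop
  simp_rw [ENNReal.ofReal_mul' (hf0 _)]
  calc ∫⁻ s in Ioo 0 t, ENNReal.ofReal (volterraKernel a₁ b₁ t s) *
        ∫⁻ r in Ioo 0 s, ENNReal.ofReal (volterraKernel a₂ b₂ s r) * ENNReal.ofReal (f r)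
      = ∫⁻ r in Ioo 0 t, (∫⁻ s in Ioo r t, ENNReal.ofReal (volterraKernel a₁ b₁ t s) *
          ENNReal.ofReal (volterraKernel a₂ b₂ s r)) * ENNReal.ofReal (f r) :=
        lintegral_Ioo_mul_lintegral_Ioo_eq hκ₁ hκ₂ hf.ennreal_ofReal 0 t
    _ ≤ ∫⁻ r in Ioo 0 t, ENNReal.ofReal C * (ENNReal.ofReal (volterraKernel a₁ b₁ t r) +
          ENNReal.ofReal (volterraKernel a₂ b₂ t r)) * ENNReal.ofReal (f r) :=
        setLIntegral_mono' measurableSet_Ioo fun r hr => by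
          gcongr
          exact hK r t hr.1 hr.2 ht.2
    _ = _ := by
        simp_rw [mul_assoc, add_mul]
        rw [lintegral_const_mul' _ _ ENNReal.ofReal_ne_top, lintegral_add_left (by fun_prop)]
        rfl

/-- composition of two singular Volterra kernels is bounded by the sum
of the individual kernel integrals. -/
theorem volterra_kernel_composition
    (T : ℝ) (hT : 0 < T) (a₁ a₂ b₁ b₂ : ℝ)
    (ha₁ : -1 < a₁) (ha₂ : -1 < a₂) (hb₁ : -1 < b₁) (hb₂ : -1 < b₂)
    (hab₁ : -1 < a₁ + b₁) (hab₂ : -1 < a₂ + b₂) :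
    ∃ C : ℝ, 0 < C ∧ ∀ t ∈ Icc (0 : ℝ) T, ∀ f : ℝ → ℝ,
      Measurable f → (∀ s, 0 ≤ f s) →
      (∫⁻ s in Ioo (0 : ℝ) t, ENNReal.ofReal ((t - s) ^ a₁ * s ^ b₁) *
          ∫⁻ r in Ioo (0 : ℝ) s, ENNReal.ofReal ((s - r) ^ a₂ * r ^ b₂ * f r)) ≤
        ENNReal.ofReal C *
          ((∫⁻ s in Ioo (0 : ℝ) t, ENNReal.ofReal ((t - s) ^ a₁ * s ^ b₁ * f s)) +
            ∫⁻ s in Ioo (0 : ℝ) t, ENNReal.ofReal ((t - s) ^ a₂ * s ^ b₂ * f s)) :=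
  volterra_kernel_composition_general T hT a₁ a₂ b₁ b₂ ha₁ ha₂ hab₁ hab₂
end

section
/- Let T > 0 and let a₁, a₂, b₁, b₂ ∈ (−1, ∞) satisfy a₁ + b₁ > −1, a₂ + b₂ > −1 and b₁ ≥ b₂. Then there exists a constant C = C(T, a₁, b₁, a₂, b₂) > 0 such that for every t ∈ [0, T] and every Borel measurable function f : [0, T] → [0, ∞), one has ∫₀ᵗ (t−s)^{a₁} s^{b₁} ( ∫₀ˢ (s−r)^{a₂} r^{b₂} f(r) dr ) ds ≤ C ∫₀ᵗ (t−s)^{a₂} s^{b₂} f(s) ds. -/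
open MeasureTheory Set
open scoped ENNReal

/-!
By Tonelli, the left-hand side equals `∫₀ᵗ K(t, r) r^b₂ f(r) dr` with
`K(t, r) = ∫ᵣᵗ (t - s)^a₁ s^b₁ (s - r)^a₂ ds`, so it suffices to show `K(t, r) ≤ C (t - r)^a₂`.
For `β = min b₁ 0` we have `s^b₁ ≤ T^(b₁ - β) (s - r)^β`, which reduces `K` to the Beta-type
integral `∫ᵣᵗ (t - s)^a₁ (s - r)^(a₂ + β) ds ≤ B (t - r)^(a₁ + a₂ + β + 1)`; since
`a₁ + β + 1 > 0`, the surplus power `(t - r)^(a₁ + β + 1)` is at most `T^(a₁ + β + 1)`.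
The Beta-type bound needs no Beta function: one of `t - s`, `s - r` is at least `(t - r) / 2`,
so the product of their powers is dominated by a sum of two one-sided singular powers.
-/

theorem Real.rpow_le_two_rpow_abs_mul_rpow_s1 {x L e : ℝ} (hL : 0 < L) (hLx : L / 2 ≤ x)
    (hxL : x ≤ L) : x ^ e ≤ 2 ^ |e| * L ^ e := by
  have hx : 0 < x := by linarith
  rcases le_or_gt 0 e with he | he
  · calc x ^ e ≤ L ^ e := Real.rpow_le_rpow hx.le hxL he
      _ ≤ 2 ^ |e| * L ^ e :=
        le_mul_of_one_le_left (by positivity) (Real.one_le_rpow one_le_two (abs_nonneg e))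
  · calc x ^ e ≤ (L / 2) ^ e := Real.rpow_le_rpow_of_nonpos (by positivity) hLx he.le
      _ = 2 ^ |e| * L ^ e := by
        rw [abs_of_neg he, Real.div_rpow hL.le zero_le_two, Real.rpow_neg zero_le_two]
        ring

theorem Real.rpow_mul_rpow_le_of_add_eq {x y L a d : ℝ} (hx : 0 < x) (hy : 0 < y)
    (hxy : x + y = L) : x ^ a * y ^ d ≤ 2 ^ |a| * L ^ a * y ^ d + 2 ^ |d| * L ^ d * x ^ a := by
  have hL : 0 < L := by linarith
  rcases le_total (L / 2) x with hLx | hLy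
  · have := Real.rpow_le_two_rpow_abs_mul_rpow_s1 (e := a) hL hLx (by linarith)
    have : 0 ≤ 2 ^ |d| * L ^ d * x ^ a := by positivity
    nlinarith [Real.rpow_nonneg hy.le d]
  · have := Real.rpow_le_two_rpow_abs_mul_rpow_s1 (e := d) hL (x := y) (by linarith) (by linarith)
    have : 0 ≤ 2 ^ |a| * L ^ a * y ^ d := by positivity
    nlinarith [Real.rpow_nonneg hx.le a]

theorem Real.rpow_le_mul_rpow_sub {r s T b β : ℝ} (hr : 0 ≤ r) (hrs : r < s) (hsT : s ≤ T)
    (hβ : β ≤ 0) (hβb : β ≤ b) : s ^ b ≤ T ^ (b - β) * (s - r) ^ β := by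
  have hs : 0 < s := hr.trans_lt hrs
  calc s ^ b = s ^ (b - β) * s ^ β := by rw [← Real.rpow_add hs, sub_add_cancel]
    _ ≤ T ^ (b - β) * (s - r) ^ β :=
      mul_le_mul (Real.rpow_le_rpow hs.le hsT (sub_nonneg.2 hβb))
        (Real.rpow_le_rpow_of_nonpos (sub_pos.2 hrs) (by linarith) hβ) (by positivity)
        (Real.rpow_nonneg (hs.le.trans hsT) _)

theorem setLIntegral_Ioo_ofReal_eq_intervalIntegral {f : ℝ → ℝ} {a b : ℝ} (hab : a ≤ b)
    (hf : IntervalIntegrable f volume a b) (hf₀ : ∀ x ∈ Ioo a b, 0 ≤ f x) :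
    ∫⁻ x in Ioo a b, ENNReal.ofReal (f x) = ENNReal.ofReal (∫ x in a..b, f x) := by
  rw [intervalIntegral.integral_of_le hab, integral_Ioc_eq_integral_Ioo,
    ofReal_integral_eq_lintegral_ofReal (hf.1.mono_set Ioo_subset_Ioc_self)
      (ae_restrict_of_forall_mem measurableSet_Ioo hf₀)]

theorem setLIntegral_Ioo_rpow_sub_left {r t c : ℝ} (hc : -1 < c) (hrt : r ≤ t) :
    ∫⁻ s in Ioo r t, ENNReal.ofReal ((s - r) ^ c) =
      ENNReal.ofReal ((t - r) ^ (c + 1) / (c + 1)) := by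
  have hint : IntervalIntegrable (fun s ↦ (s - r) ^ c) volume r t := by
    simpa using
      (intervalIntegral.intervalIntegrable_rpow' hc (a := 0) (b := t - r)).comp_sub_right r
  rw [setLIntegral_Ioo_ofReal_eq_intervalIntegral hrt hint
      (fun s hs ↦ Real.rpow_nonneg (by linarith [hs.1]) c),
    intervalIntegral.integral_comp_sub_right (· ^ c), sub_self, integral_rpow (Or.inl hc),
    Real.zero_rpow (by linarith), sub_zero]

theorem setLIntegral_Ioo_rpow_sub_right {r t c : ℝ} (hc : -1 < c) (hrt : r ≤ t) :
    ∫⁻ s in Ioo r t, ENNReal.ofReal ((t - s) ^ c) =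
      ENNReal.ofReal ((t - r) ^ (c + 1) / (c + 1)) := by
  have hint : IntervalIntegrable (fun s ↦ (t - s) ^ c) volume r t := by
    simpa using
      ((intervalIntegral.intervalIntegrable_rpow' hc (a := 0) (b := t - r)).comp_sub_left t).symm
  rw [setLIntegral_Ioo_ofReal_eq_intervalIntegral hrt hint
      (fun s hs ↦ Real.rpow_nonneg (by linarith [hs.2]) c),
    intervalIntegral.integral_comp_sub_left (· ^ c), sub_self, integral_rpow (Or.inl hc),
    Real.zero_rpow (by linarith), sub_zero]

theorem setLIntegral_Ioo_rpow_mul_rpow_le {r t a d : ℝ} (ha : -1 < a) (hd : -1 < d) (hrt : r < t) :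
    ∫⁻ s in Ioo r t, ENNReal.ofReal ((t - s) ^ a * (s - r) ^ d) ≤
      ENNReal.ofReal ((2 ^ |a| / (d + 1) + 2 ^ |d| / (a + 1)) * (t - r) ^ (a + d + 1)) := by
  obtain ⟨L, hL, rfl⟩ : ∃ L, 0 < L ∧ t = r + L := ⟨t - r, by linarith, by ring⟩
  have ha₁ : 0 < a + 1 := by linarith
  have hd₁ : 0 < d + 1 := by linarith
  calc ∫⁻ s in Ioo r (r + L), ENNReal.ofReal ((r + L - s) ^ a * (s - r) ^ d)
      ≤ ∫⁻ s in Ioo r (r + L), ENNReal.ofReal (2 ^ |a| * L ^ a) * ENNReal.ofReal ((s - r) ^ d) +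
          ENNReal.ofReal (2 ^ |d| * L ^ d) * ENNReal.ofReal ((r + L - s) ^ a) := by
        refine setLIntegral_mono (by fun_prop) fun s hs ↦ ?_
        have hx : 0 < r + L - s := sub_pos.2 hs.2
        have hy : 0 < s - r := sub_pos.2 hs.1
        rw [← ENNReal.ofReal_mul (by positivity), ← ENNReal.ofReal_mul (by positivity),
          ← ENNReal.ofReal_add (by positivity) (by positivity)]
        exact ENNReal.ofReal_le_ofReal (Real.rpow_mul_rpow_le_of_add_eq hx hy (by ring))
    _ = ENNReal.ofReal (2 ^ |a| * L ^ a * (L ^ (d + 1) / (d + 1)) +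
          2 ^ |d| * L ^ d * (L ^ (a + 1) / (a + 1))) := by
        rw [lintegral_add_left (by fun_prop), lintegral_const_mul _ (by fun_prop),
          lintegral_const_mul _ (by fun_prop), setLIntegral_Ioo_rpow_sub_left hd (by linarith),
          setLIntegral_Ioo_rpow_sub_right ha (by linarith), add_sub_cancel_left,
          ← ENNReal.ofReal_mul (by positivity), ← ENNReal.ofReal_mul (by positivity),
          ← ENNReal.ofReal_add (by positivity) (by positivity)]
    _ = _ := by
        rw [add_sub_cancel_left, Real.rpow_add hL, Real.rpow_add hL, Real.rpow_add hL,
          Real.rpow_add hL, Real.rpow_one]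
        ring_nf

theorem exists_setLIntegral_Ioo_volterra_kernel_le {T a₁ a₂ b₁ : ℝ} (hT : 0 < T)
    (ha₁ : -1 < a₁) (ha₂ : -1 < a₂) (hab₁ : -1 < a₁ + b₁) (ha₂b₁ : -1 < a₂ + b₁) :
    ∃ C > 0, ∀ r t, 0 ≤ r → r < t → t ≤ T →
      ∫⁻ s in Ioo r t, ENNReal.ofReal ((t - s) ^ a₁ * s ^ b₁) * ENNReal.ofReal ((s - r) ^ a₂) ≤
        ENNReal.ofReal C * ENNReal.ofReal ((t - r) ^ a₂) := by
  set β := min b₁ 0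
  have hβ : β ≤ 0 := min_le_right _ _
  have hβb₁ : β ≤ b₁ := min_le_left _ _
  have hβa₁ : 0 < a₁ + β + 1 := by
    rcases min_choice b₁ 0 with h | h <;> simp only [β, h] <;> linarith
  have hβa₂ : -1 < a₂ + β := by
    rcases min_choice b₁ 0 with h | h <;> simp only [β, h] <;> linarith
  set B := 2 ^ |a₁| / (a₂ + β + 1) + 2 ^ |a₂ + β| / (a₁ + 1)
  have hB : 0 < B := by
    have : 0 < a₂ + β + 1 := by linarith
    have : 0 < a₁ + 1 := by linarith
    positivity
  refine ⟨T ^ (b₁ - β) * B * T ^ (a₁ + β + 1), by positivity, fun r t hr hrt htT ↦ ?_⟩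
  have hL : 0 < t - r := sub_pos.2 hrt
  calc ∫⁻ s in Ioo r t, ENNReal.ofReal ((t - s) ^ a₁ * s ^ b₁) * ENNReal.ofReal ((s - r) ^ a₂)
      ≤ ∫⁻ s in Ioo r t, ENNReal.ofReal (T ^ (b₁ - β)) *
          ENNReal.ofReal ((t - s) ^ a₁ * (s - r) ^ (a₂ + β)) := by
        refine setLIntegral_mono (by fun_prop) fun s hs ↦ ?_
        have hts : 0 < t - s := sub_pos.2 hs.2
        have hsr : 0 < s - r := sub_pos.2 hs.1
        have hs₀ : 0 < s := hr.trans_lt hs.1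
        rw [← ENNReal.ofReal_mul (by positivity), ← ENNReal.ofReal_mul (by positivity)]
        refine ENNReal.ofReal_le_ofReal ?_
        calc (t - s) ^ a₁ * s ^ b₁ * (s - r) ^ a₂
            ≤ (t - s) ^ a₁ * (T ^ (b₁ - β) * (s - r) ^ β) * (s - r) ^ a₂ := by
              gcongr
              exact Real.rpow_le_mul_rpow_sub hr hs.1 (hs.2.le.trans htT) hβ hβb₁
          _ = T ^ (b₁ - β) * ((t - s) ^ a₁ * (s - r) ^ (a₂ + β)) := by
              rw [Real.rpow_add hsr]; ring
    _ ≤ ENNReal.ofReal (T ^ (b₁ - β)) * ENNReal.ofReal (B * (t - r) ^ (a₁ + (a₂ + β) + 1)) := by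
        rw [lintegral_const_mul _ (by fun_prop)]
        gcongr
        exact setLIntegral_Ioo_rpow_mul_rpow_le ha₁ hβa₂ hrt
    _ ≤ ENNReal.ofReal (T ^ (b₁ - β) * B * T ^ (a₁ + β + 1) * (t - r) ^ a₂) := by
        rw [← ENNReal.ofReal_mul (by positivity)]
        refine ENNReal.ofReal_le_ofReal ?_
        have hpow : (t - r) ^ (a₁ + β + 1) ≤ T ^ (a₁ + β + 1) :=
          Real.rpow_le_rpow hL.le (by linarith) hβa₁.le
        calc T ^ (b₁ - β) * (B * (t - r) ^ (a₁ + (a₂ + β) + 1))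
            = T ^ (b₁ - β) * B * (t - r) ^ (a₁ + β + 1) * (t - r) ^ a₂ := by
              rw [mul_assoc _ ((t - r) ^ _), ← Real.rpow_add hL]; ring_nf
          _ ≤ T ^ (b₁ - β) * B * T ^ (a₁ + β + 1) * (t - r) ^ a₂ := by gcongr
    _ = _ := ENNReal.ofReal_mul (by positivity)

theorem setLIntegral_Ioo_setLIntegral_Ioo_comm {a b : ℝ} {F : ℝ → ℝ → ℝ≥0∞}
    (hF : Measurable (Function.uncurry F)) :
    ∫⁻ s in Ioo a b, ∫⁻ r in Ioo a s, F s r = ∫⁻ r in Ioo a b, ∫⁻ s in Ioo r b, F s r := by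
  set S : Set (ℝ × ℝ) := {p | a < p.2 ∧ p.2 < p.1 ∧ p.1 < b}
  have hS : MeasurableSet S :=
    (measurableSet_lt measurable_const measurable_snd).inter
      ((measurableSet_lt measurable_snd measurable_fst).inter
        (measurableSet_lt measurable_fst measurable_const))
  set G : ℝ → ℝ → ℝ≥0∞ := fun s r ↦ S.indicator (Function.uncurry F) (s, r)
  have hG : Measurable (Function.uncurry G) := hF.indicator hS
  have h_left : ∀ s, ∫⁻ r, G s r = (Ioo a b).indicator (fun s ↦ ∫⁻ r in Ioo a s, F s r) s := by
    intro s
    by_cases hs : s ∈ Ioo a b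
    · rw [indicator_of_mem hs, ← lintegral_indicator measurableSet_Ioo]
      congr 1 with r
      simp only [G, S, indicator_apply, mem_Ioo, Function.uncurry_apply_pair]
      grind
    · rw [indicator_of_notMem hs]
      convert lintegral_zero with r
      exact indicator_of_notMem (fun h ↦ hs ⟨h.1.trans h.2.1, h.2.2⟩) _
  have h_right : ∀ r, ∫⁻ s, G s r = (Ioo a b).indicator (fun r ↦ ∫⁻ s in Ioo r b, F s r) r := by
    intro r
    by_cases hr : r ∈ Ioo a b
    · rw [indicator_of_mem hr, ← lintegral_indicator measurableSet_Ioo]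
      congr 1 with s
      simp only [G, S, indicator_apply, mem_Ioo, Function.uncurry_apply_pair]
      grind
    · rw [indicator_of_notMem hr]
      convert lintegral_zero with s
      exact indicator_of_notMem (fun h ↦ hr ⟨h.1, h.2.1.trans h.2.2⟩) _
  calc ∫⁻ s in Ioo a b, ∫⁻ r in Ioo a s, F s r = ∫⁻ s, ∫⁻ r, G s r := by
        simp_rw [h_left, lintegral_indicator measurableSet_Ioo]
    _ = ∫⁻ r, ∫⁻ s, G s r := lintegral_lintegral_swap hG.aemeasurable
    _ = _ := by simp_rw [h_right, lintegral_indicator measurableSet_Ioo]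

theorem setLIntegral_mul_setLIntegral_le_of_kernel_le {a t : ℝ} {k₁ g k : ℝ → ℝ≥0∞}
    {k₂ : ℝ → ℝ → ℝ≥0∞} (hk₁ : Measurable k₁) (hk₂ : Measurable (Function.uncurry k₂))
    (hg : Measurable g) (hK : ∀ r ∈ Ioo a t, ∫⁻ s in Ioo r t, k₁ s * k₂ s r ≤ k r) :
    ∫⁻ s in Ioo a t, k₁ s * ∫⁻ r in Ioo a s, k₂ s r * g r ≤ ∫⁻ r in Ioo a t, k r * g r :=
  calc ∫⁻ s in Ioo a t, k₁ s * ∫⁻ r in Ioo a s, k₂ s r * g r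
      = ∫⁻ s in Ioo a t, ∫⁻ r in Ioo a s, k₁ s * (k₂ s r * g r) :=
        lintegral_congr fun s ↦ (lintegral_const_mul _ (hk₂.of_uncurry_left.mul hg)).symm
    _ = ∫⁻ r in Ioo a t, ∫⁻ s in Ioo r t, k₁ s * (k₂ s r * g r) :=
        setLIntegral_Ioo_setLIntegral_Ioo_comm
          ((hk₁.comp measurable_fst).mul (hk₂.mul (hg.comp measurable_snd)))
    _ = ∫⁻ r in Ioo a t, (∫⁻ s in Ioo r t, k₁ s * k₂ s r) * g r := by
        refine lintegral_congr fun r ↦ ?_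
        simp_rw [← mul_assoc]
        exact lintegral_mul_const _ (hk₁.mul hk₂.of_uncurry_right)
    _ ≤ ∫⁻ r in Ioo a t, k r * g r :=
        setLIntegral_mono' measurableSet_Ioo fun r hr ↦ by gcongr; exact hK r hr

theorem volterra_kernel_composition_ordered_general
    (T : ℝ) (hT : 0 < T) (a₁ a₂ b₁ b₂ : ℝ)
    (ha₁ : -1 < a₁) (ha₂ : -1 < a₂)
    (hab₁ : -1 < a₁ + b₁) (hab₂ : -1 < a₂ + b₂) (hb : b₂ ≤ b₁) :
    ∃ C : ℝ, 0 < C ∧ ∀ t ∈ Icc (0 : ℝ) T, ∀ f : ℝ → ℝ,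
      Measurable f → (∀ s, 0 ≤ f s) →
      (∫⁻ s in Ioo (0 : ℝ) t, ENNReal.ofReal ((t - s) ^ a₁ * s ^ b₁) *
          ∫⁻ r in Ioo (0 : ℝ) s, ENNReal.ofReal ((s - r) ^ a₂ * r ^ b₂ * f r)) ≤
        ENNReal.ofReal C *
          ∫⁻ s in Ioo (0 : ℝ) t, ENNReal.ofReal ((t - s) ^ a₂ * s ^ b₂ * f s) := by
  obtain ⟨C, hC, hK⟩ :=
    exists_setLIntegral_Ioo_volterra_kernel_le hT ha₁ ha₂ hab₁ (by linarith)
  refine ⟨C, hC, fun t ht f hf hf₀ ↦ ?_⟩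
  have hsplit : ∀ x r, 0 < r →
      ENNReal.ofReal (x * r ^ b₂ * f r) = ENNReal.ofReal x * ENNReal.ofReal (r ^ b₂ * f r) :=
    fun x r hr ↦ by rw [mul_assoc, ENNReal.ofReal_mul' (mul_nonneg (by positivity) (hf₀ r))]
  calc (∫⁻ s in Ioo (0 : ℝ) t, ENNReal.ofReal ((t - s) ^ a₁ * s ^ b₁) *
          ∫⁻ r in Ioo (0 : ℝ) s, ENNReal.ofReal ((s - r) ^ a₂ * r ^ b₂ * f r))
      = ∫⁻ s in Ioo (0 : ℝ) t, ENNReal.ofReal ((t - s) ^ a₁ * s ^ b₁) *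
          ∫⁻ r in Ioo (0 : ℝ) s, ENNReal.ofReal ((s - r) ^ a₂) * ENNReal.ofReal (r ^ b₂ * f r) := by
        refine lintegral_congr fun s ↦ congrArg _ ?_
        exact setLIntegral_congr_fun measurableSet_Ioo fun r hr ↦ hsplit _ r hr.1
    _ ≤ ∫⁻ r in Ioo (0 : ℝ) t,
          ENNReal.ofReal C * ENNReal.ofReal ((t - r) ^ a₂) * ENNReal.ofReal (r ^ b₂ * f r) :=
        setLIntegral_mul_setLIntegral_le_of_kernel_le (by fun_prop) (by fun_prop) (by fun_prop)
          fun r hr ↦ hK r t hr.1.le hr.2 ht.2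
    _ = ENNReal.ofReal C * ∫⁻ s in Ioo (0 : ℝ) t, ENNReal.ofReal ((t - s) ^ a₂ * s ^ b₂ * f s) := by
        rw [← lintegral_const_mul' _ _ ENNReal.ofReal_ne_top]
        exact setLIntegral_congr_fun measurableSet_Ioo fun r hr ↦ by rw [hsplit _ r hr.1, mul_assoc]

/-- when `b₂ ≤ b₁`, the composition of the two singular Volterra kernels
is bounded by the integral against the second kernel alone. -/
theorem volterra_kernel_composition_ordered
    (T : ℝ) (hT : 0 < T) (a₁ a₂ b₁ b₂ : ℝ)
    (ha₁ : -1 < a₁) (ha₂ : -1 < a₂) (hb₁ : -1 < b₁) (hb₂ : -1 < b₂)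
    (hab₁ : -1 < a₁ + b₁) (hab₂ : -1 < a₂ + b₂) (hb : b₂ ≤ b₁) :
    ∃ C : ℝ, 0 < C ∧ ∀ t ∈ Icc (0 : ℝ) T, ∀ f : ℝ → ℝ,
      Measurable f → (∀ s, 0 ≤ f s) →
      (∫⁻ s in Ioo (0 : ℝ) t, ENNReal.ofReal ((t - s) ^ a₁ * s ^ b₁) *
          ∫⁻ r in Ioo (0 : ℝ) s, ENNReal.ofReal ((s - r) ^ a₂ * r ^ b₂ * f r)) ≤
        ENNReal.ofReal C *
          ∫⁻ s in Ioo (0 : ℝ) t, ENNReal.ofReal ((t - s) ^ a₂ * s ^ b₂ * f s) :=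
  volterra_kernel_composition_ordered_general T hT a₁ a₂ b₁ b₂ ha₁ ha₂ hab₁ hab₂ hb
end

section
/- Let α ∈ (1, 2], β₀ ∈ (−1, 0), Λ ∈ (0, α − 1), T > 0, β ∈ [0, (β₀ + α) ∧ (α − Λ)) and γ ∈ [0, α ∧ (α − 1 + β − β₀)). Then there exist an exponent p ∈ (1, ∞) and a constant C_T > 0 such that for every t ∈ (0, T] and every Borel measurable f : [0, t] → [0, ∞), ∫₀ᵗ G_β(t, s) s^{−γ/α} f(s) ds ≤ C_T ( ∫₀ᵗ f(s)^p ds )^{1/p}. -/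
/-!
`G_β(t,s) s^{-γ/α}` is a sum of two terms `t^c (t-s)^{-a} s^{-b}`. For each term, Hölder's
inequality with an exponent `q > 1` close to `1` and its conjugate `p` reduces the claim to
`∫₀ᵗ (t-s)^{-qa} s^{-qb} ds ≤ K t^{1-qa-qb}`, which holds as soon as `qa, qb < 1` (split the
integral at `t/2`). The condition `γ < α - 1 + β - β₀` makes the resulting power of `t`
nonnegative for `q` near `1`, so it is bounded by the same power of `T`.
-/

open MeasureTheory Set

/-- The kinetic Volterra kernel
`G_β(t,s) = t^{(β-β₀)/α} (t-s)^{-1/α} + t^{(β+Λ)/α} (t-s)^{-(Λ+β₀+1)/α}`. -/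
noncomputable def Gker (α β₀ Λ β t s : ℝ) : ℝ :=
  t ^ ((β - β₀) / α) * (t - s) ^ (-(1 / α)) +
    t ^ ((β + Λ) / α) * (t - s) ^ (-((Λ + β₀ + 1) / α))

open Filter Topology

noncomputable def powerKernel (c a b t s : ℝ) : ℝ :=
  t ^ c * (t - s) ^ (-a) * s ^ (-b)

lemma powerKernel_nonneg {c a b t s : ℝ} (hs : s ∈ Icc 0 t) : 0 ≤ powerKernel c a b t s := by
  unfold powerKernel
  exact mul_nonneg (mul_nonneg (Real.rpow_nonneg (hs.1.trans hs.2) _)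
    (Real.rpow_nonneg (sub_nonneg.2 hs.2) _)) (Real.rpow_nonneg hs.1 _)

lemma powerKernel_rpow {c a b t s : ℝ} (q : ℝ) (hs : s ∈ Icc 0 t) :
    powerKernel c a b t s ^ q = powerKernel (q * c) (q * a) (q * b) t s := by
  have hts : 0 ≤ t - s := sub_nonneg.2 hs.2
  have ht : 0 ≤ t := hs.1.trans hs.2
  unfold powerKernel
  rw [Real.mul_rpow (mul_nonneg (Real.rpow_nonneg ht _) (Real.rpow_nonneg hts _))
      (Real.rpow_nonneg hs.1 _), Real.mul_rpow (Real.rpow_nonneg ht _) (Real.rpow_nonneg hts _),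
    ← Real.rpow_mul ht, ← Real.rpow_mul hts, ← Real.rpow_mul hs.1]
  ring_nf

lemma Gker_mul_rpow_neg (α β₀ Λ β γ t s : ℝ) :
    Gker α β₀ Λ β t s * s ^ (-(γ / α)) =
      powerKernel ((β - β₀) / α) (1 / α) (γ / α) t s +
        powerKernel ((β + Λ) / α) ((Λ + β₀ + 1) / α) (γ / α) t s := by
  unfold Gker powerKernel
  ring

lemma setLIntegral_Ioo_comp_sub_left (F : ℝ → ENNReal) (t : ℝ) :
    ∫⁻ s in Ioo 0 t, F (t - s) = ∫⁻ s in Ioo 0 t, F s := by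
  simpa [preimage_const_sub_Ioo] using
    (volume.measurePreserving_sub_left t).setLIntegral_comp_preimage_emb
      (measurableEmbedding_subLeft t) F (Ioo 0 t)

lemma setLIntegral_Ioo_rpow_neg {B t : ℝ} (hB : B < 1) (ht : 0 < t) :
    ∫⁻ s in Ioo 0 t, ENNReal.ofReal (s ^ (-B)) = ENNReal.ofReal (t ^ (1 - B) / (1 - B)) := by
  rw [setLIntegral_congr Ioo_ae_eq_Ioc, ← ofReal_integral_eq_lintegral_ofReal]
  · rw [← intervalIntegral.integral_of_le ht.le, integral_rpow (Or.inl (by linarith)),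
      Real.zero_rpow (by linarith)]
    ring_nf
  · exact (intervalIntegral.intervalIntegrable_rpow' (by linarith)).1
  · exact ae_restrict_of_forall_mem measurableSet_Ioc fun s hs => Real.rpow_nonneg hs.1.le _

/-- The larger of `x` and `y` is at least their mean. -/
lemma rpow_neg_mul_rpow_neg_le {A B x y : ℝ} (hA : 0 ≤ A) (hB : 0 ≤ B) (hx : 0 < x) (hy : 0 < y) :
    x ^ (-A) * y ^ (-B) ≤ ((x + y) / 2) ^ (-A) * y ^ (-B) + ((x + y) / 2) ^ (-B) * x ^ (-A) := by
  have hxA := Real.rpow_nonneg hx.le (-A)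
  have hyB := Real.rpow_nonneg hy.le (-B)
  rcases le_total x y with hxy | hyx
  · have : y ^ (-B) ≤ ((x + y) / 2) ^ (-B) :=
      Real.rpow_le_rpow_of_nonpos (by positivity) (by linarith) (by linarith)
    nlinarith [Real.rpow_nonneg (by positivity : 0 ≤ (x + y) / 2) (-A)]
  · have : x ^ (-A) ≤ ((x + y) / 2) ^ (-A) :=
      Real.rpow_le_rpow_of_nonpos (by positivity) (by linarith) (by linarith)
    nlinarith [Real.rpow_nonneg (by positivity : 0 ≤ (x + y) / 2) (-B)]

lemma setLIntegral_powerKernel_le {c A B t : ℝ} (hA0 : 0 ≤ A) (hA1 : A < 1) (hB0 : 0 ≤ B)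
    (hB1 : B < 1) (ht : 0 < t) :
    ∫⁻ s in Ioo 0 t, ENNReal.ofReal (powerKernel c A B t s) ≤
      ENNReal.ofReal ((2 ^ A / (1 - B) + 2 ^ B / (1 - A)) * t ^ (c + 1 - A - B)) := by
  have hsplit : ∀ s ∈ Ioo 0 t, ENNReal.ofReal (powerKernel c A B t s) ≤
      ENNReal.ofReal (t ^ c * (t / 2) ^ (-A)) * ENNReal.ofReal (s ^ (-B)) +
        ENNReal.ofReal (t ^ c * (t / 2) ^ (-B)) * ENNReal.ofReal ((t - s) ^ (-A)) := by
    intro s ⟨hs0, hst⟩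
    have hmean := rpow_neg_mul_rpow_neg_le hA0 hB0 (sub_pos.2 hst) hs0
    rw [sub_add_cancel] at hmean
    have := Real.rpow_nonneg (sub_pos.2 hst).le (-A)
    rw [← ENNReal.ofReal_mul' (by positivity), ← ENNReal.ofReal_mul' this,
      ← ENNReal.ofReal_add (by positivity) (by positivity)]
    refine ENNReal.ofReal_le_ofReal ?_
    have := mul_le_mul_of_nonneg_left hmean (Real.rpow_nonneg ht.le c)
    unfold powerKernel
    linarith
  have hpow : ∀ E F, E + F = A + B → t ^ c * t ^ (-E) * t ^ (1 - F) = t ^ (c + 1 - A - B) :=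
    fun E F h => by rw [← Real.rpow_add ht, ← Real.rpow_add ht]; congr 1; linarith
  have hhalf : ∀ E : ℝ, (t / 2) ^ (-E) = 2 ^ E * t ^ (-E) := fun E => by
    rw [Real.div_rpow ht.le zero_le_two, Real.rpow_neg zero_le_two, div_inv_eq_mul, mul_comm]
  calc ∫⁻ s in Ioo 0 t, ENNReal.ofReal (powerKernel c A B t s)
      ≤ ∫⁻ s in Ioo 0 t, (ENNReal.ofReal (t ^ c * (t / 2) ^ (-A)) * ENNReal.ofReal (s ^ (-B)) +
          ENNReal.ofReal (t ^ c * (t / 2) ^ (-B)) * ENNReal.ofReal ((t - s) ^ (-A))) :=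
        setLIntegral_mono' measurableSet_Ioo hsplit
    _ = ENNReal.ofReal (t ^ c * (t / 2) ^ (-A) * (t ^ (1 - B) / (1 - B)) +
          t ^ c * (t / 2) ^ (-B) * (t ^ (1 - A) / (1 - A))) := by
        have := sub_pos.2 hA1
        have := sub_pos.2 hB1
        rw [lintegral_add_left (by fun_prop), lintegral_const_mul' _ _ ENNReal.ofReal_ne_top,
          lintegral_const_mul' _ _ ENNReal.ofReal_ne_top, setLIntegral_Ioo_rpow_neg hB1 ht,
          setLIntegral_Ioo_comp_sub_left (fun u => ENNReal.ofReal (u ^ (-A))),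
          setLIntegral_Ioo_rpow_neg hA1 ht, ← ENNReal.ofReal_mul (by positivity),
          ← ENNReal.ofReal_mul (by positivity),
          ← ENNReal.ofReal_add (by positivity) (by positivity)]
    _ = _ := by
        congr 1
        rw [hhalf, hhalf]
        linear_combination
          2 ^ A / (1 - B) * hpow A B rfl + 2 ^ B / (1 - A) * hpow B A (add_comm B A)

lemma lintegral_ofReal_mul_le_of_rpow_le {X : Type*} [MeasurableSpace X] {μ : Measure X}
    {p q M : ℝ} (hqp : q.HolderConjugate p) {g f : X → ℝ} (hg : AEMeasurable g μ)
    (hf : AEMeasurable f μ) (hg0 : 0 ≤ᵐ[μ] g) (hf0 : 0 ≤ f) (hM0 : 0 ≤ M)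
    (hM : ∫⁻ x, ENNReal.ofReal (g x ^ q) ∂μ ≤ ENNReal.ofReal M) :
    ∫⁻ x, ENNReal.ofReal (g x * f x) ∂μ ≤
      ENNReal.ofReal (M ^ (1 / q)) * (∫⁻ x, ENNReal.ofReal (f x ^ p) ∂μ) ^ (1 / p) := by
  have hq := hqp.pos
  calc ∫⁻ x, ENNReal.ofReal (g x * f x) ∂μ
      = ∫⁻ x, ENNReal.ofReal (g x) * ENNReal.ofReal (f x) ∂μ :=
        lintegral_congr fun x => ENNReal.ofReal_mul' (hf0 x)
    _ ≤ (∫⁻ x, ENNReal.ofReal (g x) ^ q ∂μ) ^ (1 / q) *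
          (∫⁻ x, ENNReal.ofReal (f x) ^ p ∂μ) ^ (1 / p) :=
        ENNReal.lintegral_mul_le_Lp_mul_Lq μ hqp hg.ennreal_ofReal hf.ennreal_ofReal
    _ = (∫⁻ x, ENNReal.ofReal (g x ^ q) ∂μ) ^ (1 / q) *
          (∫⁻ x, ENNReal.ofReal (f x ^ p) ∂μ) ^ (1 / p) := by
        congr 2
        · exact lintegral_congr_ae <| hg0.mono fun x hx =>
            ENNReal.ofReal_rpow_of_nonneg hx hq.le
        · exact lintegral_congr fun x => ENNReal.ofReal_rpow_of_nonneg (hf0 x) hqp.symm.nonneg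
    _ ≤ ENNReal.ofReal M ^ (1 / q) * (∫⁻ x, ENNReal.ofReal (f x ^ p) ∂μ) ^ (1 / p) := by
        gcongr
    _ = _ := by rw [ENNReal.ofReal_rpow_of_nonneg hM0 (by positivity)]

lemma exists_setLIntegral_powerKernel_mul_le {a b c p q T : ℝ} (hqp : q.HolderConjugate p)
    (ha : 0 ≤ a) (hb : 0 ≤ b) (hqa : q * a < 1) (hqb : q * b < 1) (hc : q * (a + b - c) ≤ 1)
    (hT : 0 < T) :
    ∃ C > 0, ∀ t ∈ Ioc 0 T, ∀ f : ℝ → ℝ, Measurable f → (∀ s, 0 ≤ f s) →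
      ∫⁻ s in Ioo 0 t, ENNReal.ofReal (powerKernel c a b t s * f s) ≤
        ENNReal.ofReal C * (∫⁻ s in Ioo 0 t, ENNReal.ofReal (f s ^ p)) ^ (1 / p) := by
  have hq := hqp.pos
  set K := 2 ^ (q * a) / (1 - q * b) + 2 ^ (q * b) / (1 - q * a)
  have hK : 0 < K := by
    have := sub_pos.2 hqa
    have := sub_pos.2 hqb
    positivity
  refine ⟨(K * T ^ (q * c + 1 - q * a - q * b)) ^ (1 / q), by positivity,
    fun t ⟨ht0, htT⟩ f hf hf0 => ?_⟩
  refine lintegral_ofReal_mul_le_of_rpow_le hqp (by unfold powerKernel; fun_prop)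
    hf.aemeasurable ((ae_restrict_mem measurableSet_Ioo).mono fun s hs =>
      powerKernel_nonneg (Ioo_subset_Icc_self hs)) hf0 (by positivity) ?_
  calc ∫⁻ s in Ioo 0 t, ENNReal.ofReal (powerKernel c a b t s ^ q)
      = ∫⁻ s in Ioo 0 t, ENNReal.ofReal (powerKernel (q * c) (q * a) (q * b) t s) :=
        setLIntegral_congr_fun measurableSet_Ioo fun s hs => by
          rw [powerKernel_rpow q (Ioo_subset_Icc_self hs)]
    _ ≤ ENNReal.ofReal (K * t ^ (q * c + 1 - q * a - q * b)) :=
        setLIntegral_powerKernel_le (by positivity) hqa (by positivity) hqb ht0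
    _ ≤ ENNReal.ofReal (K * T ^ (q * c + 1 - q * a - q * b)) := by
        gcongr
        linarith

lemma setLIntegral_Gker_mul_eq (α β₀ Λ β γ t : ℝ) {f : ℝ → ℝ} (hf : Measurable f)
    (hf0 : ∀ s, 0 ≤ f s) :
    ∫⁻ s in Ioo 0 t, ENNReal.ofReal (Gker α β₀ Λ β t s * s ^ (-(γ / α)) * f s) =
      (∫⁻ s in Ioo 0 t, ENNReal.ofReal (powerKernel ((β - β₀) / α) (1 / α) (γ / α) t s * f s)) +
        ∫⁻ s in Ioo 0 t,
          ENNReal.ofReal (powerKernel ((β + Λ) / α) ((Λ + β₀ + 1) / α) (γ / α) t s * f s) := by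
  rw [← lintegral_add_left (by unfold powerKernel; fun_prop)]
  refine setLIntegral_congr_fun measurableSet_Ioo fun s hs => ?_
  rw [Gker_mul_rpow_neg, add_mul, ENNReal.ofReal_add
    (mul_nonneg (powerKernel_nonneg (Ioo_subset_Icc_self hs)) (hf0 s))
    (mul_nonneg (powerKernel_nonneg (Ioo_subset_Icc_self hs)) (hf0 s))]

theorem Gker_Lp_bound_general
    (α β₀ Λ T β γ : ℝ)
    (hα : α ∈ Ioc (1 : ℝ) 2) (hβ₀ : β₀ ∈ Ioo (-1 : ℝ) 0)
    (hΛ : Λ ∈ Ioo (0 : ℝ) (α - 1)) (hT : 0 < T)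
    (hγ : γ ∈ Ico (0 : ℝ) (min α (α - 1 + β - β₀))) :
    ∃ p : ℝ, 1 < p ∧ ∃ C : ℝ, 0 < C ∧ ∀ t ∈ Ioc (0 : ℝ) T, ∀ f : ℝ → ℝ,
      Measurable f → (∀ s, 0 ≤ f s) →
      (∫⁻ s in Ioo (0 : ℝ) t,
          ENNReal.ofReal (Gker α β₀ Λ β t s * s ^ (-(γ / α)) * f s)) ≤
        ENNReal.ofReal C *
          (∫⁻ s in Ioo (0 : ℝ) t, ENNReal.ofReal (f s ^ p)) ^ (1 / p) := by
  obtain ⟨hα1, -⟩ := hα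
  obtain ⟨hβ₀1, hβ₀0⟩ := hβ₀
  obtain ⟨hΛ0, hΛα⟩ := hΛ
  obtain ⟨hγ0, hγα, hγβ⟩ : 0 ≤ γ ∧ γ < α ∧ γ < α - 1 + β - β₀ := by
    simpa only [mem_Ico, lt_min_iff] using hγ
  have hα0 : 0 < α := by linarith
  have near_one : ∀ x < α, ∀ᶠ q in 𝓝[>] 1, q * (x / α) < 1 := fun x hx =>
    (((continuous_mul_const _).tendsto' 1 _ (one_mul _)).eventually_lt_const
      ((div_lt_one hα0).2 hx)).filter_mono nhdsWithin_le_nhds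
  obtain ⟨q, hq1, h₁, h₂, hγq, hcq⟩ := (eventually_mem_nhdsWithin.and <| (near_one 1 hα1).and <|
    (near_one (Λ + β₀ + 1) (by linarith)).and <| (near_one γ hγα).and
      (near_one (1 + γ - (β - β₀)) (by linarith))).exists
  have hqp := Real.HolderConjugate.conjExponent hq1
  have hexp : ∀ a b c, a + b - c = (1 + γ - (β - β₀)) / α → q * (a + b - c) ≤ 1 :=
    fun _ _ _ h => h ▸ hcq.le
  obtain ⟨C₁, hC₁, hbound₁⟩ := exists_setLIntegral_powerKernel_mul_le (c := (β - β₀) / α) hqp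
    (by positivity) (by positivity) h₁ hγq (hexp _ _ _ (by ring)) hT
  obtain ⟨C₂, hC₂, hbound₂⟩ := exists_setLIntegral_powerKernel_mul_le (c := (β + Λ) / α) hqp
    (div_nonneg (by linarith) hα0.le) (by positivity) h₂ hγq (hexp _ _ _ (by ring)) hT
  refine ⟨_, hqp.symm.lt, C₁ + C₂, add_pos hC₁ hC₂, fun t ht f hf hf0 => ?_⟩
  calc _ = _ := setLIntegral_Gker_mul_eq α β₀ Λ β γ t hf hf0
    _ ≤ _ := add_le_add (hbound₁ t ht f hf hf0) (hbound₂ t ht f hf hf0)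
    _ = _ := by rw [← add_mul, ENNReal.ofReal_add hC₁.le hC₂.le]

/-- integral of the kinetic kernel against `s^{-γ/α} f(s)` is controlled
by an `L^p` norm of `f` for a large enough exponent `p`. -/
theorem Gker_Lp_bound
    (α β₀ Λ T β γ : ℝ)
    (hα : α ∈ Ioc (1 : ℝ) 2) (hβ₀ : β₀ ∈ Ioo (-1 : ℝ) 0)
    (hΛ : Λ ∈ Ioo (0 : ℝ) (α - 1)) (hT : 0 < T)
    (hβ : β ∈ Ico (0 : ℝ) (min (β₀ + α) (α - Λ)))
    (hγ : γ ∈ Ico (0 : ℝ) (min α (α - 1 + β - β₀))) :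
    ∃ p : ℝ, 1 < p ∧ ∃ C : ℝ, 0 < C ∧ ∀ t ∈ Ioc (0 : ℝ) T, ∀ f : ℝ → ℝ,
      Measurable f → (∀ s, 0 ≤ f s) →
      (∫⁻ s in Ioo (0 : ℝ) t,
          ENNReal.ofReal (Gker α β₀ Λ β t s * s ^ (-(γ / α)) * f s)) ≤
        ENNReal.ofReal C *
          (∫⁻ s in Ioo (0 : ℝ) t, ENNReal.ofReal (f s ^ p)) ^ (1 / p) :=
  Gker_Lp_bound_general α β₀ Λ T β γ hα hβ₀ hΛ hT hγ
end

section
/- Let d ≥ 1, let p = (p_x, p_v) with p_x, p_v ∈ [1, ∞], and set q := min(p_x, p_v, 2). Then for every finite family of Borel measurable functions f₁, …, f_N : ℝ^d × ℝ^d → ℝ one has ‖ Σ_{i=1}^N |fᵢ|² ‖_{p/2} ≤ ( Σ_{i=1}^N ‖fᵢ‖_p^q )^{2/q}, where p/2 := (p_x/2, p_v/2) (with the convention ∞/2 = ∞) and ‖·‖_{p/2} denotes the same iterated-integral expression even when a component of p/2 is smaller than 1. -/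
open MeasureTheory ENNReal

/-- Euclidean space `ℝ^d`. -/
abbrev Euc (d : ℕ) := EuclideanSpace ℝ (Fin d)

/-- The `L^p`-type quantity `(∫ g^p dμ)^{1/p}` (ess-sup for `p = ∞`) for an
`ℝ≥0∞`-valued function `g`. -/
noncomputable def eLp {X : Type*} [MeasurableSpace X] (μ : Measure X) (p : ℝ≥0∞)
    (g : X → ℝ≥0∞) : ℝ≥0∞ :=
  if p = ∞ then essSup g μ else (∫⁻ a, g a ^ p.toReal ∂μ) ^ (1 / p.toReal)

/-- Mixed (iterated) norm `‖f‖_{(p_x,p_v)}` of an `ℝ≥0∞`-valued function on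
`ℝ^d × ℝ^d`: first the `L^{p_x}` quantity in `x`, then `L^{p_v}` in `v`. -/
noncomputable def mixedNormE (d : ℕ) (px pv : ℝ≥0∞)
    (f : Euc d × Euc d → ℝ≥0∞) : ℝ≥0∞ :=
  eLp volume pv fun v => eLp volume px fun x => f (x, v)

/-- Mixed (iterated) norm `‖f‖_{(p_x,p_v)}` of a real-valued function on `ℝ^d × ℝ^d`. -/
noncomputable def mixedNorm (d : ℕ) (px pv : ℝ≥0∞)
    (f : Euc d × Euc d → ℝ) : ℝ≥0∞ :=
  mixedNormE d px pv fun z => (‖f z‖₊ : ℝ≥0∞)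

/-!
With `gᵢ = |fᵢ|` and `q = min(p_x, p_v, 2)`, the inclusion `ℓ^q ⊆ ℓ²` gives pointwise
`∑ gᵢ² ≤ (∑ gᵢ^q)^(2/q)`. The mixed norm is homogeneous under powers, `‖h^c‖_p = ‖h‖_{c p}^c`,
so the left-hand side is at most `‖∑ gᵢ^q‖_{p/q}^(2/q)`. Both components of `p/q` are at least
`1`, so Minkowski's inequality, applied first in `x` and then in `v`, bounds this by
`(∑ ‖gᵢ^q‖_{p/q})^(2/q) = (∑ ‖gᵢ‖_p^q)^(2/q)`.
-/

namespace ENNReal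

theorem sum_rpow_le_rpow_sum {ι : Type*} (s : Finset ι) (a : ι → ℝ≥0∞) {r : ℝ} (hr : 1 ≤ r) :
    ∑ i ∈ s, a i ^ r ≤ (∑ i ∈ s, a i) ^ r := by
  classical
  induction s using Finset.induction_on with
  | empty => simp [zero_rpow_of_pos (zero_lt_one.trans_le hr)]
  | insert j s hj ih =>
    rw [Finset.sum_insert hj, Finset.sum_insert hj]
    exact (add_le_add le_rfl ih).trans (add_rpow_le_rpow_add _ _ hr)

theorem sum_rpow_le_rpow_sum_rpow {ι : Type*} (s : Finset ι) (a : ι → ℝ≥0∞) {t r : ℝ}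
    (ht : 0 < t) (htr : t ≤ r) :
    ∑ i ∈ s, a i ^ r ≤ (∑ i ∈ s, a i ^ t) ^ (r / t) :=
  calc ∑ i ∈ s, a i ^ r = ∑ i ∈ s, (a i ^ t) ^ (r / t) := by
        simp only [← rpow_mul, mul_div_cancel₀ r ht.ne']
    _ ≤ _ := sum_rpow_le_rpow_sum s _ ((one_le_div ht).mpr htr)

theorem lt_essSup_iff_measure_ne_zero {X : Type*} [MeasurableSpace X] {μ : Measure X}
    {f : X → ℝ≥0∞} {c : ℝ≥0∞} : c < essSup f μ ↔ μ {x | c < f x} ≠ 0 := by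
  simp only [← not_le, not_iff_not]
  constructor
  · intro h
    exact ae_iff.mp ((ae_le_essSup f).mono fun x hx => hx.trans h)
  · intro h
    exact essSup_le_of_ae_le c (ae_iff.mpr h)

theorem div_mul_div_cancel (a : ℝ≥0∞) {b : ℝ≥0∞} (hb0 : b ≠ 0) (hb : b ≠ ∞) (c : ℝ≥0∞) :
    a / b * (b / c) = a / c := by
  simp only [div_eq_mul_inv, mul_assoc, ENNReal.inv_mul_cancel_left hb0 hb]

end ENNReal

section ProdSection

variable {X Y : Type*} [MeasurableSpace X] [MeasurableSpace Y] {μ : Measure X} [SFinite μ]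
  {h : X × Y → ℝ≥0∞}

theorem Measurable.essSup_prod_left (hh : Measurable h) :
    Measurable fun y => essSup (fun x => h (x, y)) μ := by
  refine measurable_of_Ioi fun c => ?_
  have hs : MeasurableSet {z : X × Y | c < h z} := measurableSet_lt measurable_const hh
  simp only [Set.preimage, Set.mem_Ioi, ENNReal.lt_essSup_iff_measure_ne_zero]
  exact (measurable_measure_prodMk_right hs) (measurableSet_singleton 0).compl

theorem Measurable.eLpNorm_prod_left (hh : Measurable h) (p : ℝ≥0∞) :
    Measurable fun y => eLpNorm (fun x => h (x, y)) p μ := by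
  rcases eq_or_ne p 0 with rfl | hp0
  · simp
  rcases eq_or_ne p ∞ with rfl | hptop
  · simpa [eLpNormEssSup] using hh.essSup_prod_left
  simp only [eLpNorm_eq_lintegral_rpow_enorm_toReal hp0 hptop, enorm_eq_self]
  exact ((hh.pow_const _).lintegral_prod_left').pow_const _

end ProdSection

/-- At `p = 0` the two differ: `eLp μ 0 g = 1`, whereas `eLpNorm g 0 μ = 0`. -/
theorem eLp_eq_eLpNorm {X : Type*} [MeasurableSpace X] {μ : Measure X} {p : ℝ≥0∞} (hp : p ≠ 0)
    (g : X → ℝ≥0∞) : eLp μ p g = eLpNorm g p μ := by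
  rcases eq_or_ne p ∞ with rfl | hptop
  · simp [eLp, eLpNormEssSup]
  · simp [eLp, hptop, eLpNorm_eq_lintegral_rpow_enorm_toReal hp hptop]

theorem eLpNorm_fun_sum_le {X ι : Type*} [MeasurableSpace X] {μ : Measure X} {p : ℝ≥0∞}
    (hp : 1 ≤ p) (s : Finset ι) {g : ι → X → ℝ≥0∞} (hg : ∀ i ∈ s, AEMeasurable (g i) μ) :
    eLpNorm (fun x => ∑ i ∈ s, g i x) p μ ≤ ∑ i ∈ s, eLpNorm (g i) p μ := by
  rw [← Finset.sum_fn]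
  exact eLpNorm_sum_le (fun i hi => (hg i hi).aestronglyMeasurable) hp

section MixedNorm

variable {d : ℕ} {px pv : ℝ≥0∞}

theorem mixedNormE_eq_eLpNorm (hpx : px ≠ 0) (hpv : pv ≠ 0) (f : Euc d × Euc d → ℝ≥0∞) :
    mixedNormE d px pv f = eLpNorm (fun v => eLpNorm (fun x => f (x, v)) px) pv := by
  simp only [mixedNormE, eLp_eq_eLpNorm hpx, eLp_eq_eLpNorm hpv]

theorem mixedNormE_mono (hpx : px ≠ 0) (hpv : pv ≠ 0) {f g : Euc d × Euc d → ℝ≥0∞}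
    (hfg : ∀ z, f z ≤ g z) : mixedNormE d px pv f ≤ mixedNormE d px pv g := by
  simp only [mixedNormE_eq_eLpNorm hpx hpv]
  exact eLpNorm_mono_enorm fun v => eLpNorm_mono_enorm fun x => hfg (x, v)

theorem mixedNormE_rpow (hpx : px ≠ 0) (hpv : pv ≠ 0) {c : ℝ} (hc : 0 < c)
    (f : Euc d × Euc d → ℝ≥0∞) :
    mixedNormE d px pv (fun z => f z ^ c) =
      mixedNormE d (px * .ofReal c) (pv * .ofReal c) f ^ c := by
  have hc' : ENNReal.ofReal c ≠ 0 := ENNReal.ofReal_pos.mpr hc |>.ne'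
  rw [mixedNormE_eq_eLpNorm hpx hpv,
    mixedNormE_eq_eLpNorm (mul_ne_zero hpx hc') (mul_ne_zero hpv hc')]
  have inner : ∀ v : Euc d, eLpNorm (fun x => f (x, v) ^ c) px volume =
      eLpNorm (fun x => f (x, v)) (px * ENNReal.ofReal c) volume ^ c := fun v =>
    eLpNorm_enorm_rpow (ε := ℝ≥0∞) _ hc
  simp_rw [inner]
  exact eLpNorm_enorm_rpow (ε := ℝ≥0∞) _ hc

theorem mixedNormE_sum_le (hpx : 1 ≤ px) (hpv : 1 ≤ pv) {ι : Type*} (s : Finset ι)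
    {f : ι → Euc d × Euc d → ℝ≥0∞} (hf : ∀ i ∈ s, Measurable (f i)) :
    mixedNormE d px pv (fun z => ∑ i ∈ s, f i z) ≤ ∑ i ∈ s, mixedNormE d px pv (f i) := by
  have hpx0 : px ≠ 0 := (zero_lt_one.trans_le hpx).ne'
  have hpv0 : pv ≠ 0 := (zero_lt_one.trans_le hpv).ne'
  simp only [mixedNormE_eq_eLpNorm hpx0 hpv0]
  calc eLpNorm (fun v => eLpNorm (fun x => ∑ i ∈ s, f i (x, v)) px volume) pv volume
      ≤ eLpNorm (fun v => ∑ i ∈ s, eLpNorm (fun x => f i (x, v)) px volume) pv volume :=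
        eLpNorm_mono_enorm fun v => eLpNorm_fun_sum_le hpx s fun i hi =>
          ((hf i hi).comp measurable_prodMk_right).aemeasurable
    _ ≤ ∑ i ∈ s, eLpNorm (fun v => eLpNorm (fun x => f i (x, v)) px volume) pv volume :=
        eLpNorm_fun_sum_le hpv s fun i hi => ((hf i hi).eLpNorm_prod_left px).aemeasurable

theorem mixedNormE_sum_rpow_two_le {Q : ℝ≥0∞} (hQ0 : Q ≠ 0) (hQ2 : Q ≤ 2) (hQpx : Q ≤ px)
    (hQpv : Q ≤ pv) {ι : Type*} (s : Finset ι) {g : ι → Euc d × Euc d → ℝ≥0∞}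
    (hg : ∀ i ∈ s, Measurable (g i)) :
    mixedNormE d (px / 2) (pv / 2) (fun z => ∑ i ∈ s, g i z ^ (2 : ℝ)) ≤
      (∑ i ∈ s, mixedNormE d px pv (g i) ^ Q.toReal) ^ (2 / Q.toReal) := by
  have hQtop : Q ≠ ∞ := ne_top_of_le_ne_top ofNat_ne_top hQ2
  set t := Q.toReal
  have ht : 0 < t := toReal_pos hQ0 hQtop
  have ht2 : t ≤ 2 := by simpa using toReal_mono ofNat_ne_top hQ2
  have hQt : ENNReal.ofReal t = Q := ofReal_toReal hQtop
  have one_le_div : ∀ {p : ℝ≥0∞}, Q ≤ p → 1 ≤ p / Q := fun hp => by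
    rwa [ENNReal.le_div_iff_mul_le (.inl hQ0) (.inl hQtop), one_mul]
  have div_ne_zero_of_le : ∀ {p : ℝ≥0∞}, Q ≤ p → p / Q ≠ 0 := fun hp =>
    (one_pos.trans_le (one_le_div hp)).ne'
  have div_two_ne_zero : ∀ {p : ℝ≥0∞}, Q ≤ p → p / 2 ≠ 0 := fun hp => by
    simpa using (pos_of_ne_zero hQ0).trans_le hp |>.ne'
  have half_mul : ∀ p : ℝ≥0∞, p / 2 * .ofReal (2 / t) = p / Q := fun p => by
    rw [ofReal_div_of_pos ht, hQt, ofReal_ofNat,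
      ENNReal.div_mul_div_cancel _ two_ne_zero ofNat_ne_top]
  calc mixedNormE d (px / 2) (pv / 2) (fun z => ∑ i ∈ s, g i z ^ (2 : ℝ))
      ≤ mixedNormE d (px / 2) (pv / 2) (fun z => (∑ i ∈ s, g i z ^ t) ^ (2 / t)) :=
        mixedNormE_mono (div_two_ne_zero hQpx) (div_two_ne_zero hQpv) fun z =>
          ENNReal.sum_rpow_le_rpow_sum_rpow _ _ ht ht2
    _ = mixedNormE d (px / Q) (pv / Q) (fun z => ∑ i ∈ s, g i z ^ t) ^ (2 / t) := by
        rw [mixedNormE_rpow (div_two_ne_zero hQpx) (div_two_ne_zero hQpv) (by positivity),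
          half_mul, half_mul]
    _ ≤ (∑ i ∈ s, mixedNormE d (px / Q) (pv / Q) (fun z => g i z ^ t)) ^ (2 / t) := by
        gcongr
        exact mixedNormE_sum_le (one_le_div hQpx) (one_le_div hQpv) _
          fun i hi => (hg i hi).pow_const t
    _ = (∑ i ∈ s, mixedNormE d px pv (g i) ^ t) ^ (2 / t) := by
        simp only [mixedNormE_rpow (div_ne_zero_of_le hQpx) (div_ne_zero_of_le hQpv) ht,
          hQt, ENNReal.div_mul_cancel hQ0 hQtop]

end MixedNorm

theorem Real.enorm_sum_sq {ι : Type*} (s : Finset ι) (x : ι → ℝ) :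
    ‖∑ i ∈ s, x i ^ 2‖ₑ = ∑ i ∈ s, ‖x i‖ₑ ^ (2 : ℝ) := by
  rw [Real.enorm_of_nonneg (by positivity),
    ENNReal.ofReal_sum_of_nonneg fun i _ => by positivity]
  refine Finset.sum_congr rfl fun i _ => ?_
  rw [← sq_abs, ENNReal.ofReal_pow (abs_nonneg _), Real.enorm_eq_ofReal_abs, ENNReal.rpow_two]

theorem mixedNorm_sum_sq_le_general
    (d : ℕ) (px pv : ℝ≥0∞) (hpx : 1 ≤ px) (hpv : 1 ≤ pv)
    (N : ℕ) (f : Fin N → Euc d × Euc d → ℝ) (hf : ∀ i, Measurable (f i)) :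
    mixedNorm d (px / 2) (pv / 2) (fun z => ∑ i, (f i z) ^ 2) ≤
      (∑ i, mixedNorm d px pv (f i) ^ (min px (min pv 2)).toReal) ^
        (2 / (min px (min pv 2)).toReal) := by
  have hQ0 : min px (min pv 2) ≠ 0 :=
    (one_pos.trans_le (le_min hpx (le_min hpv one_le_two))).ne'
  have key := mixedNormE_sum_rpow_two_le hQ0 ((min_le_right _ _).trans (min_le_right _ _))
    (min_le_left _ _) ((min_le_right _ _).trans (min_le_left _ _)) Finset.univ
    (g := fun i z => ‖f i z‖ₑ) fun i _ => (hf i).enorm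
  simp only [← Real.enorm_sum_sq] at key
  exact key

/-- `‖Σ |fᵢ|²‖_{p/2} ≤ (Σ ‖fᵢ‖_p^q)^{2/q}` with `q = p_x ∧ p_v ∧ 2`. -/
theorem mixedNorm_sum_sq_le
    (d : ℕ) (hd : 1 ≤ d) (px pv : ℝ≥0∞) (hpx : 1 ≤ px) (hpv : 1 ≤ pv)
    (N : ℕ) (f : Fin N → Euc d × Euc d → ℝ) (hf : ∀ i, Measurable (f i)) :
    mixedNorm d (px / 2) (pv / 2) (fun z => ∑ i, (f i z) ^ 2) ≤
      (∑ i, mixedNorm d px pv (f i) ^ (min px (min pv 2)).toReal) ^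
        (2 / (min px (min pv 2)).toReal) :=
  mixedNorm_sum_sq_le_general d px pv hpx hpv N f hf
end
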